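/- Let V and W be Jordan cells of Ã_ℝ. Then V is isomorphic to W if and only if there exists a k-linear isomorphism A : V(e^{iα_0}) → W(e^{iα_0}) such that V̂ = A^{-1} ∘ Ŵ ∘ A, where V̂ and Ŵ are the monodromy automorphisms of V and W at e^{iα_0}. -/

import Mathlib

open Set

noncomputable section

/-- A continuous quiver of type Ã: the data of the (even) set `S` of sinks/sources
on the circle, described via the cardinality `2*m`-ish data `m` and the angles `α`.
When `m = 0` we are in the cyclic case and fix `α j = π j`. -/
structure AtR where
  m : ℕ
  α : ℤ → ℝ
  mono : StrictMono α
  cyc : m = 0 → ∀ j : ℤ, α j = Real.pi * j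
  per : m ≠ 0 → ∀ j : ℤ, α (j + 2 * m) = α j + 2 * Real.pi
  base0 : 0 ≤ α 0
  base1 : α 0 < 2 * Real.pi

namespace AtR

variable (Q : AtR)

/-- `covRel θ φ` holds iff there is a morphism `e^{iθ} → e^{iφ}` in the continuous
quiver of type Ã, presented on the universal cover `ℝ` of the circle.
In the cyclic case (`m = 0`) morphisms go counterclockwise, i.e. `θ ≤ φ`;
otherwise a morphism stays within one (lifted) arc `[α j, α (j+1)]` and goes
down on even arcs (towards the sink `α j`) and up on odd arcs. -/
def covRel (θ φ : ℝ) : Prop :=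
  if Q.m = 0 then θ ≤ φ
  else ∃ j : ℤ, θ ∈ Set.Icc (Q.α j) (Q.α (j + 1)) ∧ φ ∈ Set.Icc (Q.α j) (Q.α (j + 1)) ∧
    ((Even j ∧ φ ≤ θ) ∨ (¬ Even j ∧ θ ≤ φ))

variable {Q}

lemma arcs_overlap {j j' : ℤ} {x : ℝ}
    (hj : x ∈ Set.Icc (Q.α j) (Q.α (j + 1))) (hj' : x ∈ Set.Icc (Q.α j') (Q.α (j' + 1)))
    (hne : j ≠ j') :
    (j' = j + 1 ∧ x = Q.α (j + 1)) ∨ (j = j' + 1 ∧ x = Q.α j) := by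
  rcases lt_or_gt_of_ne hne with h | h
  · left
    have h1 : j + 1 ≤ j' := by omega
    have h2 : Q.α (j + 1) ≤ Q.α j' := Q.mono.monotone h1
    have hx : x = Q.α (j + 1) := le_antisymm hj.2 (le_trans h2 hj'.1)
    have hx2 : Q.α (j + 1) = Q.α j' := le_antisymm h2 (hx ▸ hj'.1)
    exact ⟨(Q.mono.injective hx2).symm, hx⟩
  · right
    have h1 : j' + 1 ≤ j := by omega
    have h2 : Q.α (j' + 1) ≤ Q.α j := Q.mono.monotone h1
    have hx : x = Q.α (j' + 1) := le_antisymm hj'.2 (le_trans h2 hj.1)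
    have hx2 : Q.α (j' + 1) = Q.α j := le_antisymm h2 (hx ▸ hj.1)
    exact ⟨Q.mono.injective hx2.symm, hx.trans hx2⟩

/-- Key lemma: if there are morphisms `θ → φ` and `φ → ψ` then `φ` lies in the
convex hull of `{θ, ψ}`. -/
lemma covRel_hull {θ φ ψ : ℝ} (h1 : Q.covRel θ φ) (h2 : Q.covRel φ ψ) :
    min θ ψ ≤ φ ∧ φ ≤ max θ ψ := by
  unfold covRel at h1 h2
  by_cases hm : Q.m = 0
  · rw [if_pos hm] at h1 h2
    exact ⟨le_trans (min_le_left _ _) h1, le_trans h2 (le_max_right _ _)⟩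
  · rw [if_neg hm] at h1 h2
    obtain ⟨j, hθ, hφ, hp⟩ := h1
    obtain ⟨j2, hφ2, hψ, hp2⟩ := h2
    by_cases hjj : j = j2
    · subst hjj
      rcases hp with ⟨he, hle⟩ | ⟨ho, hle⟩ <;> rcases hp2 with ⟨he2, hle2⟩ | ⟨ho2, hle2⟩
      · exact ⟨le_trans (min_le_right _ _) hle2, le_trans hle (le_max_left _ _)⟩
      · exact absurd he ho2
      · exact absurd he2 ho
      · exact ⟨le_trans (min_le_left _ _) hle, le_trans hle2 (le_max_right _ _)⟩
    · rcases arcs_overlap hφ hφ2 hjj with ⟨hj2, hφe⟩ | ⟨hj2, hφe⟩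
      · -- j2 = j + 1, φ = α (j+1)
        rcases hp with ⟨he, hle⟩ | ⟨ho, hle⟩
        · -- Even j, φ ≤ θ and θ ≤ α (j+1) = φ so θ = φ
          have hθφ : θ = φ := le_antisymm (hφe ▸ hθ.2) hle
          rw [← hθφ]
          exact ⟨min_le_left _ _, le_max_left _ _⟩
        · -- Odd j so j2 = j+1 is even
          have he2 : Even j2 := by
            rw [hj2]; rcases Int.even_or_odd j with h | h
            · exact absurd h ho
            · exact h.add_one
          rcases hp2 with ⟨_, hle2⟩ | ⟨ho2, _⟩
          · -- ψ ≤ φ, but φ = α j2 is the bottom of the arc of j2, so ψ = φ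
            have hψφ : ψ = φ := by
              have : Q.α j2 ≤ ψ := hψ.1
              have hb : φ = Q.α j2 := by rw [hj2]; exact hφe
              linarith [hb ▸ this]
            rw [← hψφ]
            exact ⟨min_le_right _ _, le_max_right _ _⟩
          · exact absurd he2 ho2
      · -- j = j2 + 1, φ = α j
        rcases hp2 with ⟨he2, hle2⟩ | ⟨ho2, hle2⟩
        · -- Even j2, ψ ≤ φ; φ = α j = α (j2+1) is the top of arc j2... and j odd
          have ho : ¬ Even j := by
            rw [hj2]; intro h
            exact (Int.even_add_one.mp h) he2
          rcases hp with ⟨he', _⟩ | ⟨_, hle⟩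
          · exact absurd he' ho
          · -- θ ≤ φ, φ = α j is bottom of arc j, so θ = φ
            have hθφ : θ = φ := le_antisymm hle (hφe ▸ hθ.1)
            rw [← hθφ]
            exact ⟨min_le_left _ _, le_max_left _ _⟩
        · -- Odd j2, φ ≤ ψ; φ = α (j2+1) top of arc j2 so ψ = φ
          have hψφ : ψ = φ := by
            have hup : ψ ≤ Q.α (j2 + 1) := hψ.2
            have hb : φ = Q.α (j2 + 1) := by rw [← hj2]; exact hφe
            linarith [hb ▸ hup]
          rw [← hψφ]
          exact ⟨min_le_right _ _, le_max_right _ _⟩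

lemma covRel_up (j : ℤ) (h : Q.m = 0 ∨ ¬ Even j) : Q.covRel (Q.α j) (Q.α (j + 1)) := by
  unfold covRel
  split_ifs with hm
  · exact Q.mono.monotone (by omega)
  · rcases h with h0 | hodd
    · exact absurd h0 hm
    · exact ⟨j, ⟨le_rfl, Q.mono.monotone (by omega)⟩,
        ⟨Q.mono.monotone (by omega), le_rfl⟩,
        Or.inr ⟨hodd, Q.mono.monotone (by omega)⟩⟩

lemma covRel_down (j : ℤ) (hm : Q.m ≠ 0) (he : Even j) :
    Q.covRel (Q.α (j + 1)) (Q.α j) := by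
  unfold covRel
  rw [if_neg hm]
  exact ⟨j, ⟨Q.mono.monotone (by omega), le_rfl⟩, ⟨le_rfl, Q.mono.monotone (by omega)⟩,
    Or.inl ⟨he, Q.mono.monotone (by omega)⟩⟩

variable (Q)

/-- The number of arcs used to travel once around the circle. -/
def periodN : ℕ := if Q.m = 0 then 2 else 2 * Q.m

lemma periodN_pos : 0 < Q.periodN := by
  unfold periodN; split_ifs <;> omega

lemma α_periodN : Q.α (Q.periodN : ℤ) = Q.α 0 + 2 * Real.pi := by
  unfold periodN
  split_ifs with hm
  · have h2 : ((2:ℕ):ℤ) = 2 := by norm_cast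
    rw [h2, Q.cyc hm 2, Q.cyc hm 0]
    push_cast; ring
  · have := Q.per hm 0
    rw [zero_add] at this
    rw [← this]
    norm_cast

end AtR
/-- A representation (i.e. an `S¹` persistence module) of the continuous quiver of
type Ã, presented equivariantly on the universal cover: vector spaces `obj θ`,
linear maps along every morphism of the quiver (encoded by `covRel`), and a
periodicity isomorphism `per` identifying `obj (θ + 2π)` with `obj θ`,
compatibly with the maps. -/
structure SRep (k : Type) [Field k] (Q : AtR) where
  obj : ℝ → Type
  [instAdd : ∀ θ, AddCommGroup (obj θ)]
  [instMod : ∀ θ, Module k (obj θ)]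
  map : ∀ {θ φ : ℝ}, Q.covRel θ φ → (obj θ →ₗ[k] obj φ)
  map_id : ∀ (θ : ℝ) (h : Q.covRel θ θ), map h = LinearMap.id
  map_comp : ∀ {θ φ ψ : ℝ} (h1 : Q.covRel θ φ) (h2 : Q.covRel φ ψ) (h3 : Q.covRel θ ψ),
      map h3 = (map h2).comp (map h1)
  per : ∀ θ : ℝ, obj (θ + 2 * Real.pi) ≃ₗ[k] obj θ
  per_map : ∀ {θ φ : ℝ} (h : Q.covRel θ φ) (h' : Q.covRel (θ + 2 * Real.pi) (φ + 2 * Real.pi)),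
      (map h).comp (per θ).toLinearMap = ((per φ).toLinearMap).comp (map h')

attribute [instance] SRep.instAdd SRep.instMod

namespace SRep

variable {k : Type} [Field k] {Q : AtR}

lemma per_map_apply (V : SRep k Q) {θ φ : ℝ} (h : Q.covRel θ φ)
    (h' : Q.covRel (θ + 2 * Real.pi) (φ + 2 * Real.pi)) (x : V.obj (θ + 2 * Real.pi)) :
    V.map h (V.per θ x) = V.per φ (V.map h' x) :=
  LinearMap.congr_fun (V.per_map h h') x

/-- Transport along an equality of points of the cover. -/
def castO (V : SRep k Q) {a b : ℝ} (h : a = b) : V.obj a ≃ₗ[k] V.obj b :=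
  h ▸ LinearEquiv.refl k (V.obj a)

/-- A family of linear maps is a morphism of representations if it is natural with
respect to all the structure maps and the periodicity isomorphisms. -/
def IsHomFam (V W : SRep k Q) (f : ∀ θ, V.obj θ →ₗ[k] W.obj θ) : Prop :=
  (∀ {θ φ : ℝ} (h : Q.covRel θ φ) (v : V.obj θ), f φ (V.map h v) = W.map h (f θ v)) ∧
  (∀ (θ : ℝ) (v : V.obj (θ + 2 * Real.pi)), f θ (V.per θ v) = W.per θ (f (θ + 2 * Real.pi) v))

/-- Two representations are isomorphic if there is a family of linear isomorphisms
natural with respect to the structure maps and the periodicity isomorphisms. -/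
def RepIso (V W : SRep k Q) : Prop :=
  ∃ e : ∀ θ, V.obj θ ≃ₗ[k] W.obj θ,
    (∀ {θ φ : ℝ} (h : Q.covRel θ φ) (v : V.obj θ), e φ (V.map h v) = W.map h (e θ v)) ∧
    (∀ (θ : ℝ) (v : V.obj (θ + 2 * Real.pi)), e θ (V.per θ v) = W.per θ (e (θ + 2 * Real.pi) v))

/-- `U` is a (direct) summand of `V`. -/
def SummandOf (U V : SRep k Q) : Prop :=
  ∃ (f : ∀ θ, U.obj θ →ₗ[k] V.obj θ) (g : ∀ θ, V.obj θ →ₗ[k] U.obj θ),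
    IsHomFam U V f ∧ IsHomFam V U g ∧ ∀ (θ : ℝ) (u : U.obj θ), g θ (f θ u) = u

/-- A representation is nonzero if some of its spaces is nonzero. -/
def Nonzero (V : SRep k Q) : Prop := ∃ (θ : ℝ) (v : V.obj θ), v ≠ 0

/-- Pointwise finite-dimensional. -/
def Pwf (V : SRep k Q) : Prop := ∀ θ, FiniteDimensional k (V.obj θ)

/-- Binary direct sum of representations. -/
def prod (V W : SRep k Q) : SRep k Q where
  obj θ := V.obj θ × W.obj θ
  map h := (V.map h).prodMap (W.map h)
  map_id θ h := by
    rw [V.map_id θ h, W.map_id θ h]; exact LinearMap.prodMap_id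
  map_comp h1 h2 h3 := by
    rw [V.map_comp h1 h2 h3, W.map_comp h1 h2 h3]
    exact (LinearMap.prodMap_comp _ _ _ _).symm
  per θ := (V.per θ).prodCongr (W.per θ)
  per_map h h' := by
    apply LinearMap.ext
    rintro ⟨a, b⟩
    simp only [LinearMap.comp_apply, LinearEquiv.coe_coe, LinearMap.prodMap_apply,
      LinearEquiv.prodCongr_apply]
    exact Prod.ext (V.per_map_apply h h' a) (W.per_map_apply h h' b)

/-- Arbitrary direct sums of representations. -/
def dsum {B : Type} (A : B → SRep k Q) : SRep k Q where
  obj θ := Π₀ b, (A b).obj θ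
  map h := DFinsupp.mapRange.linearMap fun b => (A b).map h
  map_id θ h := by
    have : (fun b => (A b).map h) = fun b => (LinearMap.id : (A b).obj θ →ₗ[k] _) := by
      funext b; exact (A b).map_id θ h
    rw [this]; exact DFinsupp.mapRange.linearMap_id
  map_comp h1 h2 h3 := by
    have : (fun b => (A b).map h3) = fun b => ((A b).map h2).comp ((A b).map h1) := by
      funext b; exact (A b).map_comp h1 h2 h3
    rw [this]; exact DFinsupp.mapRange.linearMap_comp _ _
  per θ := DFinsupp.mapRange.linearEquiv fun b => (A b).per θ
  per_map h h' := by
    apply LinearMap.ext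
    intro x
    ext b
    simp only [LinearMap.comp_apply, LinearEquiv.coe_coe,
      DFinsupp.mapRange.linearEquiv_apply, DFinsupp.mapRange.linearMap_apply,
      DFinsupp.mapRange_apply]
    exact (A b).per_map_apply h h' (x b)

/-- Indecomposability. -/
def Indecomposable (V : SRep k Q) : Prop :=
  V.Nonzero ∧ ∀ A B : SRep k Q, A.Nonzero → B.Nonzero → ¬ RepIso V (A.prod B)

end SRep
/-! ## Bars -/

/-- The basis of the bar `M_I` at the point `e^{iθ}`: the set `ξ⁻¹(e^{iθ}) ∩ I`. -/
def barIdx (I : Set ℝ) (θ : ℝ) : Type :=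
  {β : ℝ // β ∈ I ∧ ∃ n : ℤ, β = θ + 2 * Real.pi * n}

/-- The canonical identification of the bars' bases over `θ + 2π` and `θ`. -/
def barShift (I : Set ℝ) (θ : ℝ) : barIdx I (θ + 2 * Real.pi) ≃ barIdx I θ where
  toFun b := ⟨b.1, b.2.1, by
    obtain ⟨n, hn⟩ := b.2.2
    exact ⟨n + 1, by push_cast; linarith⟩⟩
  invFun b := ⟨b.1, b.2.1, by
    obtain ⟨n, hn⟩ := b.2.2
    exact ⟨n - 1, by push_cast; linarith⟩⟩
  left_inv b := by apply Subtype.ext; rfl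
  right_inv b := by apply Subtype.ext; rfl

variable (k : Type) [Field k]

/-- The structure map of the bar `M_I` along a morphism `θ → φ`:
a basis vector `b_β` is sent to `b_{β - θ + φ}` when `β - θ + φ ∈ I` and to `0`
otherwise. -/
def barMapHom (I : Set ℝ) (θ φ : ℝ) :
    (barIdx I θ →₀ k) →ₗ[k] (barIdx I φ →₀ k) := by
  classical
  exact Finsupp.linearCombination k (fun β : barIdx I θ =>
    if h : β.1 - θ + φ ∈ I then
      Finsupp.single (⟨β.1 - θ + φ, h, by
        obtain ⟨n, hn⟩ := β.2.2
        exact ⟨n, by rw [hn]; ring⟩⟩ : barIdx I φ) (1 : k)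
    else 0)

variable {k}

namespace SRep

variable {Q : AtR}

/-- `V` is (isomorphic to) the bar `M_I` on the bounded interval `I ⊂ ℝ`. -/
def BarOn (I : Set ℝ) (V : SRep k Q) : Prop :=
  I.Nonempty ∧ Bornology.IsBounded I ∧ I.OrdConnected ∧
  ∃ e : ∀ θ, V.obj θ ≃ₗ[k] (barIdx I θ →₀ k),
    (∀ {θ φ : ℝ} (h : Q.covRel θ φ) (v : V.obj θ),
        e φ (V.map h v) = barMapHom k I θ φ (e θ v)) ∧
    (∀ (θ : ℝ) (v : V.obj (θ + 2 * Real.pi)),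
        e θ (V.per θ v) = Finsupp.equivMapDomain (barShift I θ) (e (θ + 2 * Real.pi) v))

/-- `V` is a bar. -/
def IsBar (V : SRep k Q) : Prop := ∃ I : Set ℝ, BarOn I V

end SRep
/-! ## Jordan cells -/

namespace SRep

variable {k : Type} [Field k] {Q : AtR}

/-- One step of the monodromy: the isomorphism `V(α j) ≃ V(α (j+1))` obtained
from the structure map along the arc (or its inverse, depending on the
orientation of the arc). -/
def step (V : SRep k Q)
    (hiso : ∀ ⦃θ φ : ℝ⦄ (h : Q.covRel θ φ), Function.Bijective (V.map h)) (j : ℤ) :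
    V.obj (Q.α j) ≃ₗ[k] V.obj (Q.α (j + 1)) :=
  if h : Q.m = 0 ∨ ¬ Even j then
    LinearEquiv.ofBijective _ (hiso (AtR.covRel_up j h))
  else
    (LinearEquiv.ofBijective _ (hiso (AtR.covRel_down j
      (by push_neg at h; exact h.1) (by push_neg at h; exact h.2)))).symm

/-- The zig-zag isomorphism from `V(α 0)` to `V(α n)`. -/
def zig (V : SRep k Q)
    (hiso : ∀ ⦃θ φ : ℝ⦄ (h : Q.covRel θ φ), Function.Bijective (V.map h)) :
    (n : ℕ) → (V.obj (Q.α 0) ≃ₗ[k] V.obj (Q.α (n : ℤ)))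
  | 0 => V.castO (congrArg Q.α (by norm_num))
  | (n + 1) => ((V.zig hiso n).trans (V.step hiso (n : ℤ))).trans
      (V.castO (congrArg Q.α (by push_cast; ring)))

/-- The monodromy automorphism `V̂` of `V(α 0)`: travel once counterclockwise
around the circle (via `zig`) and come back via the periodicity isomorphism. -/
def monodromy (V : SRep k Q)
    (hiso : ∀ ⦃θ φ : ℝ⦄ (h : Q.covRel θ φ), Function.Bijective (V.map h)) :
    V.obj (Q.α 0) ≃ₗ[k] V.obj (Q.α 0) :=
  ((V.zig hiso Q.periodN).trans (V.castO Q.α_periodN)).trans (V.per (Q.α 0))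

/-- `V` is a Jordan cell: its spaces have a constant finite dimension `d ≥ 1`,
all its structure maps are isomorphisms, and `V(α 0)` admits no direct sum
decomposition into two nonzero subspaces invariant under the monodromy. -/
structure IsJordanCell (V : SRep k Q) : Prop where
  bij : ∀ ⦃θ φ : ℝ⦄ (h : Q.covRel θ φ), Function.Bijective (V.map h)
  dim : ∃ d : ℕ, 1 ≤ d ∧ ∀ θ, Module.finrank k (V.obj θ) = d
  indec : ∀ U W : Submodule k (V.obj (Q.α 0)), IsCompl U W →
      (∀ u ∈ U, V.monodromy bij u ∈ U) → (∀ w ∈ W, V.monodromy bij w ∈ W) →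
      U = ⊥ ∨ W = ⊥

end SRep
/-! ## Restriction -/

/-- The periodization of a subset of `ℝ`: the full preimage under `ξ` of its image
in the circle. -/
def periodize (s : Set ℝ) : Set ℝ := {θ | ∃ n : ℤ, θ + 2 * Real.pi * n ∈ s}

lemma periodize_shift (s : Set ℝ) (θ : ℝ) :
    θ ∈ periodize s ↔ θ + 2 * Real.pi ∈ periodize s := by
  constructor
  · rintro ⟨n, hn⟩
    refine ⟨n - 1, ?_⟩
    push_cast
    rw [show θ + 2 * Real.pi + 2 * Real.pi * ((n : ℝ) - 1) = θ + 2 * Real.pi * (n : ℝ) from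
      by ring]
    exact hn
  · rintro ⟨n, hn⟩
    refine ⟨n + 1, ?_⟩
    push_cast
    rw [show θ + 2 * Real.pi * ((n : ℝ) + 1) = θ + 2 * Real.pi + 2 * Real.pi * (n : ℝ) from
      by ring]
    exact hn

namespace SRep

open Classical

variable {k : Type} [Field k] {Q : AtR}

/-- The restriction `V|_A` of a representation to a (2π-periodic) subset `A ⊂ ℝ`
corresponding to a subset of the circle.  Its space at `θ ∈ A` is `V(θ)` and `0`
elsewhere; its structure map along a morphism `θ → φ` is `V(θ,φ)` when every
point through which the morphism factors lies in `A` (the set of such points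
being the interval `[min θ φ, max θ φ]`), and `0` otherwise. -/
def restrict (V : SRep k Q) (A : Set ℝ) (hA : ∀ θ, θ ∈ A ↔ θ + 2 * Real.pi ∈ A) :
    SRep k Q where
  obj θ := PLift (θ ∈ A) → V.obj θ
  map {θ φ} h :=
    { toFun := fun F _ =>
        if c : Set.Icc (min θ φ) (max θ φ) ⊆ A then
          V.map h (F ⟨c ⟨min_le_left θ φ, le_max_left θ φ⟩⟩) else 0
      map_add' := by
        intro F G; funext hφ
        by_cases c : Set.Icc (min θ φ) (max θ φ) ⊆ A <;> simp [c]
      map_smul' := by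
        intro a F; funext hφ
        by_cases c : Set.Icc (min θ φ) (max θ φ) ⊆ A <;> simp [c] }
  map_id θ h := by
    apply LinearMap.ext; intro F; funext hφ
    have c : Set.Icc (min θ θ) (max θ θ) ⊆ A := by
      rw [min_self, max_self, Set.Icc_self]
      exact Set.singleton_subset_iff.mpr hφ.down
    simp only [LinearMap.coe_mk, AddHom.coe_mk, LinearMap.id_coe, id_eq]
    rw [dif_pos c, V.map_id θ h]
    rfl
  map_comp {θ φ ψ} h1 h2 h3 := by
    apply LinearMap.ext; intro F; funext hψ
    have hkey := AtR.covRel_hull h1 h2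
    have s1 : Set.Icc (min θ φ) (max θ φ) ⊆ Set.Icc (min θ ψ) (max θ ψ) :=
      Set.Icc_subset_Icc (le_min (min_le_left θ ψ) hkey.1) (max_le (le_max_left θ ψ) hkey.2)
    have s2 : Set.Icc (min φ ψ) (max φ ψ) ⊆ Set.Icc (min θ ψ) (max θ ψ) :=
      Set.Icc_subset_Icc (le_min hkey.1 (min_le_right θ ψ)) (max_le hkey.2 (le_max_right θ ψ))
    by_cases c1 : Set.Icc (min θ φ) (max θ φ) ⊆ A
    · by_cases c2 : Set.Icc (min φ ψ) (max φ ψ) ⊆ A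
      · have c3 : Set.Icc (min θ ψ) (max θ ψ) ⊆ A := by
          intro z hz
          rcases le_total θ ψ with hθψ | hθψ
          · rw [min_eq_left hθψ, max_eq_right hθψ] at hz
            rcases le_total z φ with hzφ | hzφ
            · exact c1 ⟨le_trans (min_le_left θ φ) hz.1, le_trans hzφ (le_max_right θ φ)⟩
            · exact c2 ⟨le_trans (min_le_left φ ψ) hzφ, le_trans hz.2 (le_max_right φ ψ)⟩
          · rw [min_eq_right hθψ, max_eq_left hθψ] at hz
            rcases le_total z φ with hzφ | hzφ
            · exact c2 ⟨le_trans (min_le_right φ ψ) hz.1, le_trans hzφ (le_max_left φ ψ)⟩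
            · exact c1 ⟨le_trans (min_le_right θ φ) hzφ, le_trans hz.2 (le_max_left θ φ)⟩
        simp only [LinearMap.coe_mk, AddHom.coe_mk, LinearMap.comp_apply]
        rw [dif_pos c3, dif_pos c2, dif_pos c1, V.map_comp h1 h2 h3]
        rfl
      · have c3 : ¬ Set.Icc (min θ ψ) (max θ ψ) ⊆ A := fun c3 => c2 fun z hz => c3 (s2 hz)
        simp only [LinearMap.coe_mk, AddHom.coe_mk, LinearMap.comp_apply]
        rw [dif_neg c3, dif_neg c2]
    · have c3 : ¬ Set.Icc (min θ ψ) (max θ ψ) ⊆ A := fun c3 => c1 fun z hz => c3 (s1 hz)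
      simp only [LinearMap.coe_mk, AddHom.coe_mk, LinearMap.comp_apply]
      rw [dif_neg c3]
      by_cases c2 : Set.Icc (min φ ψ) (max φ ψ) ⊆ A
      · rw [dif_pos c2, dif_neg c1, map_zero]
      · rw [dif_neg c2]
  per θ :=
    { toFun := fun F hθ => V.per θ (F ⟨(hA θ).mp hθ.down⟩)
      map_add' := by intro F G; funext hθ; simp
      map_smul' := by intro a F; funext hθ; simp
      invFun := fun G h2 => (V.per θ).symm (G ⟨(hA θ).mpr h2.down⟩)
      left_inv := by intro F; funext h2; simp
      right_inv := by intro G; funext hθ; simp }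
  per_map {θ φ} h h' := by
    apply LinearMap.ext; intro F; funext hφ
    have e1 : min (θ + 2 * Real.pi) (φ + 2 * Real.pi) = min θ φ + 2 * Real.pi :=
      min_add_add_right θ φ _
    have e2 : max (θ + 2 * Real.pi) (φ + 2 * Real.pi) = max θ φ + 2 * Real.pi :=
      max_add_add_right θ φ _
    have hcc : (Set.Icc (min (θ + 2 * Real.pi) (φ + 2 * Real.pi))
        (max (θ + 2 * Real.pi) (φ + 2 * Real.pi)) ⊆ A) ↔
        (Set.Icc (min θ φ) (max θ φ) ⊆ A) := by
      rw [e1, e2]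
      constructor
      · intro c z hz
        rw [hA z]
        exact c ⟨by linarith [hz.1], by linarith [hz.2]⟩
      · intro c z hz
        have h2 : z - 2 * Real.pi ∈ Set.Icc (min θ φ) (max θ φ) :=
          ⟨by linarith [hz.1], by linarith [hz.2]⟩
        have h3 := (hA (z - 2 * Real.pi)).mp (c h2)
        simpa using h3
    simp only [LinearMap.coe_mk, AddHom.coe_mk, LinearMap.comp_apply, LinearEquiv.coe_coe,
      LinearEquiv.coe_mk]
    by_cases c : Set.Icc (min θ φ) (max θ φ) ⊆ A
    · rw [dif_pos c, dif_pos (hcc.mpr c)]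
      exact V.per_map_apply h h' _
    · rw [dif_neg c, dif_neg (fun cc => c (hcc.mp cc)), map_zero]

/-- `V` is finitistic: it is pointwise finite-dimensional and for each arc
`R̄_n = [α n, α (n+1)]`, every bar in the bar code decomposition of the
restriction `V|_{R̄_n}` has support touching an endpoint of the arc. -/
def Finitistic (V : SRep k Q) : Prop :=
  Pwf V ∧ ∀ n : ℤ, ∃ (B : Type) (Wb : B → SRep k Q) (I : B → Set ℝ),
    (∀ b, BarOn (I b) (Wb b) ∧ I b ⊆ Set.Icc (Q.α n) (Q.α (n + 1)) ∧
      (Q.α n ∈ I b ∨ Q.α (n + 1) ∈ I b)) ∧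
    RepIso (V.restrict (periodize (Set.Icc (Q.α n) (Q.α (n + 1))))
      (periodize_shift _)) (dsum Wb)

end SRep
/-! ## Representations of (finite) quivers of type Ã_n

An `Ã_n` quiver has `N = n + 1` vertices, indexed by `ZMod N`, arranged
counterclockwise in a cycle, with exactly one arrow between the vertices `i` and
`i + 1` for each `i : ZMod N`; the orientation function `o` records its direction
(`o i = true` iff the arrow goes `i → i + 1`). -/

/-- A representation of the `Ã_{N-1}` quiver with orientation `o`. -/
structure CycRep (k : Type) [Field k] (N : ℕ) (o : ZMod N → Bool) where
  M : ZMod N → Type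
  [instAdd : ∀ i, AddCommGroup (M i)]
  [instMod : ∀ i, Module k (M i)]
  up : ∀ i : ZMod N, o i = true → (M i →ₗ[k] M (i + 1))
  down : ∀ i : ZMod N, o i = false → (M (i + 1) →ₗ[k] M i)

attribute [instance] CycRep.instAdd CycRep.instMod

namespace CycRep

variable {k : Type} [Field k] {N : ℕ} {o : ZMod N → Bool}

/-- Transport along an equality of vertices. -/
def castM (A : CycRep k N o) {i i' : ZMod N} (h : i = i') : A.M i ≃ₗ[k] A.M i' :=
  h ▸ LinearEquiv.refl k (A.M i)

/-- Isomorphism of representations of the `Ã_{N-1}` quiver. -/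
def Iso (A B : CycRep k N o) : Prop :=
  ∃ e : ∀ i, A.M i ≃ₗ[k] B.M i,
    (∀ (i : ZMod N) (h : o i = true) (v : A.M i),
        e (i + 1) (A.up i h v) = B.up i h (e i v)) ∧
    (∀ (i : ZMod N) (h : o i = false) (v : A.M (i + 1)),
        e i (A.down i h v) = B.down i h (e (i + 1) v))

def Nonzero (A : CycRep k N o) : Prop := ∃ (i : ZMod N) (v : A.M i), v ≠ 0

/-- Binary direct sum. -/
def prod (A B : CycRep k N o) : CycRep k N o where
  M i := A.M i × B.M i
  up i h := (A.up i h).prodMap (B.up i h)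
  down i h := (A.down i h).prodMap (B.down i h)

/-- Arbitrary direct sum. -/
def dsum {B : Type} (A : B → CycRep k N o) : CycRep k N o where
  M i := Π₀ b, (A b).M i
  up i h := DFinsupp.mapRange.linearMap fun b => (A b).up i h
  down i h := DFinsupp.mapRange.linearMap fun b => (A b).down i h

def Indecomposable (A : CycRep k N o) : Prop :=
  A.Nonzero ∧ ∀ B C : CycRep k N o, B.Nonzero → C.Nonzero → ¬ Iso A (B.prod C)

end CycRep

/-- The basis of the bar on the interval `{a, ..., b} ⊂ ℤ` at the vertex `i`:
integers in the interval congruent to `i` mod `N`. -/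
def cycIdx (N : ℕ) (a b : ℤ) (i : ZMod N) : Type :=
  {m : ℤ // m ∈ Set.Icc a b ∧ ((m : ZMod N) = i)}

variable (k : Type) [Field k]

open Classical in
/-- The bar's map along an arrow `i → i + 1` : `b_m ↦ b_{m+1}` when `m+1` stays in
the interval, and `0` otherwise. -/
def cycBarUp (N : ℕ) (a b : ℤ) (i : ZMod N) :
    (cycIdx N a b i →₀ k) →ₗ[k] (cycIdx N a b (i + 1) →₀ k) :=
  Finsupp.linearCombination k (fun m : cycIdx N a b i =>
    if hm : m.1 + 1 ∈ Set.Icc a b then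
      Finsupp.single (⟨m.1 + 1, hm, by push_cast; rw [m.2.2]⟩ : cycIdx N a b (i + 1)) (1 : k)
    else 0)

open Classical in
/-- The bar's map along an arrow `i + 1 → i` : `b_m ↦ b_{m-1}` when `m-1` stays in
the interval, and `0` otherwise. -/
def cycBarDown (N : ℕ) (a b : ℤ) (i : ZMod N) :
    (cycIdx N a b (i + 1) →₀ k) →ₗ[k] (cycIdx N a b i →₀ k) :=
  Finsupp.linearCombination k (fun m : cycIdx N a b (i + 1) =>
    if hm : m.1 - 1 ∈ Set.Icc a b then
      Finsupp.single (⟨m.1 - 1, hm, by push_cast; rw [m.2.2]; ring⟩ : cycIdx N a b i) (1 : k)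
    else 0)

variable {k}

namespace CycRep

variable {k : Type} [Field k] {N : ℕ} {o : ZMod N → Bool}

/-- `A` is (isomorphic to) the bar on the interval `{a, ..., b}` of `ℤ`. -/
def BarOn (a b : ℤ) (A : CycRep k N o) : Prop :=
  a ≤ b ∧ ∃ e : ∀ i, A.M i ≃ₗ[k] (cycIdx N a b i →₀ k),
    (∀ (i : ZMod N) (h : o i = true) (v : A.M i),
        e (i + 1) (A.up i h v) = cycBarUp k N a b i (e i v)) ∧
    (∀ (i : ZMod N) (h : o i = false) (v : A.M (i + 1)),
        e i (A.down i h v) = cycBarDown k N a b i (e (i + 1) v))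

def IsBar (A : CycRep k N o) : Prop := ∃ a b : ℤ, BarOn a b A

/-- One step `M i ≃ M (i+1)` of the monodromy of a representation all of whose
arrow maps are isomorphisms. -/
def stepC (A : CycRep k N o)
    (hup : ∀ (i : ZMod N) (h : o i = true), Function.Bijective (A.up i h))
    (hdown : ∀ (i : ZMod N) (h : o i = false), Function.Bijective (A.down i h))
    (i : ZMod N) : A.M i ≃ₗ[k] A.M (i + 1) :=
  if h : o i = true then LinearEquiv.ofBijective _ (hup i h)
  else (LinearEquiv.ofBijective _ (hdown i (by revert h; cases o i <;> simp))).symm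

def zigC (A : CycRep k N o)
    (hup : ∀ (i : ZMod N) (h : o i = true), Function.Bijective (A.up i h))
    (hdown : ∀ (i : ZMod N) (h : o i = false), Function.Bijective (A.down i h)) :
    (n : ℕ) → (A.M 0 ≃ₗ[k] A.M (n : ZMod N))
  | 0 => A.castM (by norm_num)
  | (n + 1) => ((A.zigC hup hdown n).trans (A.stepC hup hdown (n : ZMod N))).trans
      (A.castM (by push_cast; ring))

/-- The monodromy `M̂ : M 0 ≃ M 0` obtained by composing the arrow maps and their
inverses once around the cycle. -/
def monodromyC (A : CycRep k N o)
    (hup : ∀ (i : ZMod N) (h : o i = true), Function.Bijective (A.up i h))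
    (hdown : ∀ (i : ZMod N) (h : o i = false), Function.Bijective (A.down i h)) :
    A.M 0 ≃ₗ[k] A.M 0 :=
  (A.zigC hup hdown N).trans (A.castM (by simp))

/-- `A` is a Jordan cell representation of the `Ã_{N-1}` quiver. -/
structure IsJordan (A : CycRep k N o) : Prop where
  bijUp : ∀ (i : ZMod N) (h : o i = true), Function.Bijective (A.up i h)
  bijDown : ∀ (i : ZMod N) (h : o i = false), Function.Bijective (A.down i h)
  dim : ∃ d : ℕ, 1 ≤ d ∧ ∀ i, Module.finrank k (A.M i) = d
  indec : ∀ U W : Submodule k (A.M 0), IsCompl U W →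
      (∀ u ∈ U, A.monodromyC bijUp bijDown u ∈ U) →
      (∀ w ∈ W, A.monodromyC bijUp bijDown w ∈ W) → U = ⊥ ∨ W = ⊥

end CycRep
/-! ## Partitions of the circle and push downs -/

/-- A finite partition of the circle into (at least two) path-connected parts,
presented on the universal cover: `2π`-periodically ordered intervals `J j`
(`j : ℤ`), with `J (j + N)` the translate of `J j`; the parts of the circle are
the images of the `J j`, and `j` reduces mod `N` to the index of the part. -/
structure CircPartition (Q : AtR) where
  N : ℕ
  hN : 2 ≤ N
  J : ℤ → Set ℝ
  nonempty : ∀ j, (J j).Nonempty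
  ordconn : ∀ j, (J j).OrdConnected
  ordered : ∀ {j j' : ℤ}, j < j' → ∀ x ∈ J j, ∀ y ∈ J j', x < y
  cover : ∀ θ : ℝ, ∃ j, θ ∈ J j
  jper : ∀ (j : ℤ) (θ : ℝ), θ ∈ J j ↔ θ + 2 * Real.pi ∈ J (j + N)

namespace CircPartition

variable {Q : AtR} (C : CircPartition Q)

/-- The index of the part containing `θ`. -/
def partIdx (θ : ℝ) : ℤ := Classical.choose (C.cover θ)

lemma mem_partIdx (θ : ℝ) : θ ∈ C.J (C.partIdx θ) := Classical.choose_spec (C.cover θ)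

lemma partIdx_eq {θ : ℝ} {j : ℤ} (h : θ ∈ C.J j) : C.partIdx θ = j := by
  by_contra hne
  rcases lt_or_gt_of_ne hne with hlt | hlt
  · exact lt_irrefl θ (C.ordered hlt _ (C.mem_partIdx θ) _ h)
  · exact lt_irrefl θ (C.ordered hlt _ h _ (C.mem_partIdx θ))

lemma partIdx_shift (θ : ℝ) : C.partIdx (θ + 2 * Real.pi) = C.partIdx θ + C.N :=
  C.partIdx_eq ((C.jper _ _).mp (C.mem_partIdx θ))

/-- The index of the part containing `θ`, as a vertex of the auxiliary quiver. -/
def partZ (θ : ℝ) : ZMod C.N := ((C.partIdx θ : ℤ) : ZMod C.N)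

lemma partZ_shift (θ : ℝ) : C.partZ (θ + 2 * Real.pi) = C.partZ θ := by
  unfold partZ
  rw [C.partIdx_shift θ]
  push_cast
  simp

lemma partZ_congr {θ φ : ℝ} (hp : C.partIdx θ = C.partIdx φ) : C.partZ θ = C.partZ φ := by
  unfold partZ; rw [hp]

lemma partZ_succ {θ φ : ℝ} (hp : C.partIdx φ = C.partIdx θ + 1) :
    C.partZ θ + 1 = C.partZ φ := by
  unfold partZ; rw [hp]; push_cast; ring

lemma partZ_pred {θ φ : ℝ} (hp : C.partIdx θ = C.partIdx φ + 1) :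
    C.partZ θ = C.partZ φ + 1 := by
  unfold partZ; rw [hp]; push_cast; ring

/-- There is an arrow from the part of `J j` to the part of `J (j+1)` in the
auxiliary quiver (their union being automatically path-connected). -/
def dirUp (j : ℤ) : Prop := ∃ x ∈ C.J j, ∃ y ∈ C.J (j + 1), Q.covRel x y

/-- There is an arrow from the part of `J (j+1)` to the part of `J j`. -/
def dirDown (j : ℤ) : Prop := ∃ x ∈ C.J (j + 1), ∃ y ∈ C.J j, Q.covRel x y

end CircPartition

namespace SRep

variable {k : Type} [Field k] {Q : AtR}

/-- `U` is the push down to the continuous quiver of the representation `A` of the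
auxiliary `Ã_{N-1}` quiver of the partition `C` (with orientation `o`):
`U` is constant equal to `A.M i` on the `i`-th part, with identity maps within a
part, the maps of `A` across boundaries of parts, and the evident periodicity. -/
def PushdownOf (C : CircPartition Q) (o : ZMod C.N → Bool) (A : CycRep k C.N o)
    (U : SRep k Q) : Prop :=
  ∃ e : ∀ θ, U.obj θ ≃ₗ[k] A.M (C.partZ θ),
    (∀ {θ φ : ℝ} (h : Q.covRel θ φ) (hp : C.partIdx θ = C.partIdx φ) (v : U.obj θ),
        e φ (U.map h v) = A.castM (C.partZ_congr hp) (e θ v)) ∧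
    (∀ {θ φ : ℝ} (h : Q.covRel θ φ) (hp : C.partIdx φ = C.partIdx θ + 1)
        (ht : o (C.partZ θ) = true) (v : U.obj θ),
        e φ (U.map h v) = A.castM (C.partZ_succ hp) (A.up (C.partZ θ) ht (e θ v))) ∧
    (∀ {θ φ : ℝ} (h : Q.covRel θ φ) (hp : C.partIdx θ = C.partIdx φ + 1)
        (hf : o (C.partZ φ) = false) (v : U.obj θ),
        e φ (U.map h v) = A.down (C.partZ φ) hf (A.castM (C.partZ_pred hp) (e θ v))) ∧
    (∀ (θ : ℝ) (v : U.obj (θ + 2 * Real.pi)),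
        e θ (U.per θ v) = A.castM (C.partZ_shift θ) (e (θ + 2 * Real.pi) v))

/-- Transport between the values of `V` at representative points whose indices
agree modulo the period, using the periodicity isomorphism if needed. -/
def ptBridge (V : SRep k Q) (pt : ℤ → ℝ) (Nn : ℕ)
    (hper : ∀ j : ℤ, pt (j + (Nn : ℤ)) = pt j + 2 * Real.pi) {a b : ℤ}
    (h : a = b ∨ a = b + (Nn : ℤ)) : V.obj (pt a) ≃ₗ[k] V.obj (pt b) :=
  if he : a = b then V.castO (congrArg pt he)
  else (V.castO (show pt a = pt b + 2 * Real.pi by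
      rw [h.resolve_left he]; exact hper b)).trans (V.per (pt b))

lemma zmod_val_succ {N : ℕ} (hN : 2 ≤ N) (i : ZMod N) :
    (((i + 1 : ZMod N).val : ℤ) = (i.val : ℤ) + 1) ∨
      ((i.val : ℤ) + 1 = ((i + 1 : ZMod N).val : ℤ) + (N : ℤ)) := by
  haveI : NeZero N := ⟨by omega⟩
  haveI : Fact (1 < N) := ⟨by omega⟩
  have hval : (i + 1 : ZMod N).val = (i.val + 1) % N := by
    rw [ZMod.val_add, ZMod.val_one]
  have hlt : i.val < N := ZMod.val_lt i
  rcases Nat.lt_or_ge (i.val + 1) N with h | h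
  · left; rw [hval, Nat.mod_eq_of_lt h]; push_cast; ring
  · right
    have he : i.val + 1 = N := by omega
    rw [hval, he, Nat.mod_self]
    push_cast
    omega

/-- The auxiliary representation `M_V` of the auxiliary quiver of a partition `C`,
given by the values of `V` at the representative points `pt`. -/
def auxOfPoints (V : SRep k Q) (C : CircPartition Q) (o : ZMod C.N → Bool) (pt : ℤ → ℝ)
    (hper : ∀ j : ℤ, pt (j + (C.N : ℤ)) = pt j + 2 * Real.pi)
    (hup : ∀ (i : ZMod C.N), o i = true → Q.covRel (pt (i.val : ℤ)) (pt ((i.val : ℤ) + 1)))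
    (hdown : ∀ (i : ZMod C.N), o i = false → Q.covRel (pt ((i.val : ℤ) + 1)) (pt (i.val : ℤ))) :
    CycRep k C.N o where
  M i := V.obj (pt (i.val : ℤ))
  up i h := (V.ptBridge pt C.N hper
      ((zmod_val_succ C.hN i).imp Eq.symm id)).toLinearMap ∘ₗ V.map (hup i h)
  down i h := V.map (hdown i h) ∘ₗ (V.ptBridge pt C.N hper
      ((zmod_val_succ C.hN i).imp Eq.symm id)).symm.toLinearMap

/-- `U` is the refinement of `V` with respect to the partition `C` and the choice
of representative points `pt`: `U(θ) = V(pt (partIdx θ))`, with structure maps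
induced by those of `V` between representative points. -/
def RefinementOf (V : SRep k Q) (C : CircPartition Q) (pt : ℤ → ℝ)
    (hper : ∀ j : ℤ, pt (j + (C.N : ℤ)) = pt j + 2 * Real.pi) (U : SRep k Q) : Prop :=
  (∀ j, pt j ∈ C.J j) ∧
  ∃ e : ∀ θ, U.obj θ ≃ₗ[k] V.obj (pt (C.partIdx θ)),
    (∀ {θ φ : ℝ} (h : Q.covRel θ φ) (hp : C.partIdx θ = C.partIdx φ) (v : U.obj θ),
        e φ (U.map h v) = V.castO (congrArg pt hp) (e θ v)) ∧
    (∀ {θ φ : ℝ} (h : Q.covRel θ φ)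
        (hc : Q.covRel (pt (C.partIdx θ)) (pt (C.partIdx φ))) (v : U.obj θ),
        e φ (U.map h v) = V.map hc (e θ v)) ∧
    (∀ (θ : ℝ) (v : U.obj (θ + 2 * Real.pi)),
        e θ (U.per θ v) = V.per (pt (C.partIdx θ))
          ((V.castO (show pt (C.partIdx (θ + 2 * Real.pi)) = pt (C.partIdx θ) + 2 * Real.pi by
            rw [C.partIdx_shift θ]; exact hper _)) (e (θ + 2 * Real.pi) v)))

end SRep
/-! ## The endomorphism ring -/

namespace SRep

variable {k : Type} [Field k] {Q : AtR}

/-- The endomorphism ring of a representation: the subring of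
`∀ θ, End (V θ)` consisting of the natural families (with multiplication given by
pointwise composition). -/
def endSubring (V : SRep k Q) : Subring (∀ θ, Module.End k (V.obj θ)) where
  carrier := {f | IsHomFam V V f}
  mul_mem' := by
    rintro a b ⟨ha1, ha2⟩ ⟨hb1, hb2⟩
    constructor
    · intro θ φ h v
      simp only [Pi.mul_apply, Module.End.mul_apply]
      rw [hb1 h v, ha1 h]
    · intro θ v
      simp only [Pi.mul_apply, Module.End.mul_apply]
      rw [hb2 θ v, ha2 θ]
  one_mem' := by
    constructor
    · intro θ φ h v; simp
    · intro θ v; simp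
  add_mem' := by
    rintro a b ⟨ha1, ha2⟩ ⟨hb1, hb2⟩
    constructor
    · intro θ φ h v
      simp only [Pi.add_apply, LinearMap.add_apply]
      rw [ha1 h v, hb1 h v, map_add]
    · intro θ v
      simp only [Pi.add_apply, LinearMap.add_apply]
      rw [ha2 θ v, hb2 θ v, map_add]
  zero_mem' := by
    constructor
    · intro θ φ h v; simp
    · intro θ v; simp
  neg_mem' := by
    rintro a ⟨ha1, ha2⟩
    constructor
    · intro θ φ h v
      simp only [Pi.neg_apply, LinearMap.neg_apply]
      rw [ha1 h v, map_neg]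
    · intro θ v
      simp only [Pi.neg_apply, LinearMap.neg_apply]
      rw [ha2 θ v, map_neg]

end SRep

/-! Since every structure map of a Jordan cell is invertible, transporting along the zig-zag of
arcs trivializes it on the universal cover: there are isomorphisms `τ θ : V(θ) ≃ V(α₀)`
compatible with every structure map, and read through them the periodicity isomorphism
`V(θ + 2π) ≃ V(θ)` becomes the monodromy `V̂`. Hence `θ ↦ τ_W(θ)⁻¹ ∘ A ∘ τ_V(θ)` is an
isomorphism `V ≃ W` as soon as `A V̂ = Ŵ A`. Conversely, read through these trivializations a
natural isomorphism becomes a family of maps `V(α₀) → W(α₀)` that is constant along `covRel`,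
hence (as `covRel` connects `ℝ`) a single map, and that map intertwines `V̂` and `Ŵ`. -/

namespace AtR

variable (Q : AtR)

lemma α_add_periodN (j : ℤ) : Q.α (j + Q.periodN) = Q.α j + 2 * Real.pi := by
  by_cases hm : Q.m = 0
  · simp only [periodN, if_pos hm, Q.cyc hm]
    push_cast; ring
  · simpa [periodN, if_neg hm] using Q.per hm j

lemma α_mul_periodN (n : ℤ) : Q.α (n * Q.periodN) = Q.α 0 + n * (2 * Real.pi) := by
  induction n using Int.induction_on with
  | zero => simp
  | succ i ih =>
    rw [add_mul, one_mul, Q.α_add_periodN, ih]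
    push_cast; ring
  | pred i ih =>
    have h := Q.α_add_periodN ((-i - 1) * Q.periodN)
    rw [show (-(i : ℤ) - 1) * Q.periodN + Q.periodN = -i * Q.periodN by ring, ih] at h
    push_cast at h ⊢
    linarith

lemma exists_mem_Ico (θ : ℝ) : ∃ j : ℤ, θ ∈ Ico (Q.α j) (Q.α (j + 1)) := by
  have h2π : 0 < 2 * Real.pi := by positivity
  obtain ⟨lo, hlo⟩ := exists_int_lt ((θ - Q.α 0) / (2 * Real.pi))
  obtain ⟨hi, hhi⟩ := exists_int_gt ((θ - Q.α 0) / (2 * Real.pi))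
  rw [lt_div_iff₀ h2π] at hlo
  rw [div_lt_iff₀ h2π] at hhi
  have hbdd : ∀ j, Q.α j ≤ θ → j ≤ hi * Q.periodN := fun j hj =>
    Q.mono.le_iff_le.mp (hj.trans (by rw [Q.α_mul_periodN]; linarith))
  obtain ⟨j, hj, hmax⟩ := Int.exists_greatest_of_bdd ⟨_, hbdd⟩
    ⟨lo * Q.periodN, by rw [Q.α_mul_periodN]; linarith⟩
  exact ⟨j, hj, not_le.mp fun h => (hmax _ h).not_gt (lt_add_one j)⟩

/-- The index of the arc `[α j, α (j + 1))` containing `θ`. -/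
def idx (θ : ℝ) : ℤ := (Q.exists_mem_Ico θ).choose

lemma mem_Ico_idx (θ : ℝ) : θ ∈ Ico (Q.α (Q.idx θ)) (Q.α (Q.idx θ + 1)) :=
  (Q.exists_mem_Ico θ).choose_spec

lemma idx_mono : Monotone Q.idx := fun θ φ hθφ =>
  Int.lt_add_one_iff.mp <| Q.mono.lt_iff_lt.mp <|
    (Q.mem_Ico_idx θ).1.trans_lt (hθφ.trans_lt (Q.mem_Ico_idx φ).2)

variable {Q}

lemma idx_eq {θ : ℝ} {j : ℤ} (h : θ ∈ Ico (Q.α j) (Q.α (j + 1))) : Q.idx θ = j := by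
  have h' := Q.mem_Ico_idx θ
  have h₁ : Q.idx θ < j + 1 := Q.mono.lt_iff_lt.mp (h'.1.trans_lt h.2)
  have h₂ : j < Q.idx θ + 1 := Q.mono.lt_iff_lt.mp (h.1.trans_lt h'.2)
  omega

lemma idx_α (j : ℤ) : Q.idx (Q.α j) = j :=
  idx_eq (left_mem_Ico.2 (Q.mono (lt_add_one j)))

lemma covRel_iff_le (hm : Q.m = 0) {θ φ : ℝ} : Q.covRel θ φ ↔ θ ≤ φ := by
  simp [covRel, hm]

lemma covRel_of_mem_arc_up {j : ℤ} (hj : Q.m = 0 ∨ ¬ Even j) {θ φ : ℝ}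
    (hθ : θ ∈ Icc (Q.α j) (Q.α (j + 1))) (hφ : φ ∈ Icc (Q.α j) (Q.α (j + 1))) (hle : θ ≤ φ) :
    Q.covRel θ φ := by
  by_cases hm : Q.m = 0
  · exact (covRel_iff_le hm).2 hle
  · simp only [covRel, if_neg hm]
    exact ⟨j, hθ, hφ, Or.inr ⟨hj.resolve_left hm, hle⟩⟩

lemma covRel_of_mem_arc_down (hm : Q.m ≠ 0) {j : ℤ} (hj : Even j) {θ φ : ℝ}
    (hθ : θ ∈ Icc (Q.α j) (Q.α (j + 1))) (hφ : φ ∈ Icc (Q.α j) (Q.α (j + 1))) (hle : φ ≤ θ) :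
    Q.covRel θ φ := by
  simp only [covRel, if_neg hm]
  exact ⟨j, hθ, hφ, Or.inl ⟨hj, hle⟩⟩

lemma left_mem_arc (j : ℤ) : Q.α j ∈ Icc (Q.α j) (Q.α (j + 1)) :=
  left_mem_Icc.2 (Q.mono (lt_add_one j)).le

lemma right_mem_arc (j : ℤ) : Q.α (j + 1) ∈ Icc (Q.α j) (Q.α (j + 1)) :=
  right_mem_Icc.2 (Q.mono (lt_add_one j)).le

lemma covRel_add_two_pi {θ φ : ℝ} (h : Q.covRel θ φ) :
    Q.covRel (θ + 2 * Real.pi) (φ + 2 * Real.pi) := by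
  by_cases hm : Q.m = 0
  · rw [covRel_iff_le hm] at h ⊢
    linarith
  · simp only [covRel, if_neg hm] at h ⊢
    obtain ⟨j, hθ, hφ, horient⟩ := h
    have hα : ∀ i : ℤ, Q.α (i + 2 * Q.m) = Q.α i + 2 * Real.pi := fun i => by
      exact_mod_cast Q.per hm i
    have hparity : Even (j + 2 * Q.m) ↔ Even j := by simp [Int.even_add]
    refine ⟨j + 2 * Q.m, ?_, ?_, ?_⟩
    · rw [add_right_comm, hα, hα]
      exact ⟨by linarith [hθ.1], by linarith [hθ.2]⟩
    · rw [add_right_comm, hα, hα]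
      exact ⟨by linarith [hφ.1], by linarith [hφ.2]⟩
    · rw [hparity]
      rcases horient with ⟨he, hle⟩ | ⟨ho, hle⟩
      · exact Or.inl ⟨he, by linarith⟩
      · exact Or.inr ⟨ho, by linarith⟩

lemma eq_of_covRel_invariant {β : Sort*} {f : ℝ → β}
    (hf : ∀ ⦃θ φ : ℝ⦄, Q.covRel θ φ → f θ = f φ) (θ φ : ℝ) : f θ = f φ := by
  have harc : ∀ (j : ℤ) {x : ℝ}, x ∈ Icc (Q.α j) (Q.α (j + 1)) → f (Q.α j) = f x := by
    intro j x hx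
    by_cases hj : Q.m = 0 ∨ ¬ Even j
    · exact hf (covRel_of_mem_arc_up hj (left_mem_arc j) hx hx.1)
    · push Not at hj
      exact (hf (covRel_of_mem_arc_down hj.1 hj.2 hx (left_mem_arc j) hx.1)).symm
  have hgrid : ∀ j : ℤ, f (Q.α j) = f (Q.α 0) := by
    intro j
    induction j using Int.induction_on with
    | zero => rfl
    | succ i ih => rw [← harc i (right_mem_arc i), ih]
    | pred i ih =>
      rw [harc (-i - 1) (right_mem_arc _), sub_add_cancel, ih]
  have hbase : ∀ x, f x = f (Q.α 0) := fun x =>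
    (harc _ (mem_Icc_of_Ico (Q.mem_Ico_idx x))).symm.trans (hgrid _)
  rw [hbase θ, hbase φ]

end AtR

namespace SRep

variable {k : Type} [Field k] {Q : AtR} (X : SRep k Q)
  (hX : ∀ ⦃θ φ : ℝ⦄ (h : Q.covRel θ φ), Function.Bijective (X.map h))

lemma map_map {θ φ ψ : ℝ} (h₁ : Q.covRel θ φ) (h₂ : Q.covRel φ ψ) (h₃ : Q.covRel θ ψ)
    (v : X.obj θ) : X.map h₂ (X.map h₁ v) = X.map h₃ v :=
  (LinearMap.congr_fun (X.map_comp h₁ h₂ h₃) v).symm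

/-- The isomorphism from the start `α j` of the arc `j` to one of its points, given by the
structure map between them, in whichever direction the arc is oriented. -/
def arcEquiv (j : ℤ) {x : ℝ} (hx : x ∈ Icc (Q.α j) (Q.α (j + 1))) :
    X.obj (Q.α j) ≃ₗ[k] X.obj x :=
  if h : Q.m = 0 ∨ ¬ Even j then
    LinearEquiv.ofBijective _ (hX (AtR.covRel_of_mem_arc_up h (AtR.left_mem_arc j) hx hx.1))
  else
    (LinearEquiv.ofBijective _ (hX (AtR.covRel_of_mem_arc_down (not_or.mp h).1
      (not_not.mp (not_or.mp h).2) hx (AtR.left_mem_arc j) hx.1))).symm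

lemma step_eq_arcEquiv (j : ℤ) :
    X.step hX j = X.arcEquiv hX j (AtR.right_mem_arc j) :=
  rfl

lemma arcEquiv_left (j : ℤ) (hx : Q.α j ∈ Icc (Q.α j) (Q.α (j + 1))) (u : X.obj (Q.α j)) :
    X.arcEquiv hX j hx u = u := by
  unfold arcEquiv
  split_ifs
  · simp [X.map_id]
  · rw [LinearEquiv.symm_apply_eq]
    simp [X.map_id]

lemma map_arcEquiv (j : ℤ) {θ φ : ℝ} (h : Q.covRel θ φ)
    (hθ : θ ∈ Icc (Q.α j) (Q.α (j + 1))) (hφ : φ ∈ Icc (Q.α j) (Q.α (j + 1)))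
    (u : X.obj (Q.α j)) : X.map h (X.arcEquiv hX j hθ u) = X.arcEquiv hX j hφ u := by
  unfold arcEquiv
  split_ifs
  · exact X.map_map _ _ _ u
  · rw [LinearEquiv.eq_symm_apply]
    simp only [LinearEquiv.ofBijective_apply]
    rw [X.map_map]
    exact LinearEquiv.apply_symm_apply (LinearEquiv.ofBijective _ _) u

def negGridToBase : ∀ n : ℕ, X.obj (Q.α (Int.negSucc n)) ≃ₗ[k] X.obj (Q.α 0)
  | 0 => (X.step hX (Int.negSucc 0)).trans (X.zig hX 0).symm
  | n + 1 => (X.step hX (Int.negSucc (n + 1))).trans (negGridToBase n)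

def gridToBase : ∀ j : ℤ, X.obj (Q.α j) ≃ₗ[k] X.obj (Q.α 0)
  | (n : ℕ) => (X.zig hX n).symm
  | Int.negSucc n => X.negGridToBase hX n

lemma gridToBase_step (j : ℤ) (u : X.obj (Q.α j)) :
    X.gridToBase hX (j + 1) (X.step hX j u) = X.gridToBase hX j u := by
  match j with
  | (n : ℕ) =>
    change (X.zig hX (n + 1)).symm (X.step hX n u) = (X.zig hX n).symm u
    rw [LinearEquiv.symm_apply_eq]
    exact congrArg (X.step hX n) ((X.zig hX n).apply_symm_apply u).symm
  | Int.negSucc 0 => rfl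
  | Int.negSucc (n + 1) => rfl

/-- The trivialization of `X` over the universal cover (see `toBase_map`). -/
def toBase (θ : ℝ) : X.obj θ ≃ₗ[k] X.obj (Q.α 0) :=
  (X.arcEquiv hX (Q.idx θ) (mem_Icc_of_Ico (Q.mem_Ico_idx θ))).symm.trans
    (X.gridToBase hX (Q.idx θ))

lemma toBase_of_mem_Ico {x : ℝ} {j : ℤ} (hx : x ∈ Ico (Q.α j) (Q.α (j + 1))) (w : X.obj x) :
    X.toBase hX x w = X.gridToBase hX j ((X.arcEquiv hX j (mem_Icc_of_Ico hx)).symm w) := by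
  obtain rfl := AtR.idx_eq hx
  rfl

lemma toBase_α (j : ℤ) (w : X.obj (Q.α j)) : X.toBase hX (Q.α j) w = X.gridToBase hX j w := by
  rw [X.toBase_of_mem_Ico hX (left_mem_Ico.2 (Q.mono (lt_add_one j)))]
  exact congrArg _ ((LinearEquiv.symm_apply_eq _).2 (X.arcEquiv_left hX j _ w).symm)

lemma toBase_arcEquiv (j : ℤ) {x : ℝ} (hx : x ∈ Icc (Q.α j) (Q.α (j + 1)))
    (u : X.obj (Q.α j)) : X.toBase hX x (X.arcEquiv hX j hx u) = X.gridToBase hX j u := by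
  rcases hx.2.lt_or_eq with hlt | rfl
  · rw [X.toBase_of_mem_Ico hX ⟨hx.1, hlt⟩, LinearEquiv.symm_apply_apply]
  · rw [← step_eq_arcEquiv, toBase_α, gridToBase_step]

lemma toBase_map_of_mem_arc (j : ℤ) {θ φ : ℝ} (h : Q.covRel θ φ)
    (hθ : θ ∈ Icc (Q.α j) (Q.α (j + 1))) (hφ : φ ∈ Icc (Q.α j) (Q.α (j + 1))) (v : X.obj θ) :
    X.toBase hX φ (X.map h v) = X.toBase hX θ v := by
  obtain ⟨u, rfl⟩ := (X.arcEquiv hX j hθ).surjective v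
  rw [X.map_arcEquiv hX j h hθ hφ, toBase_arcEquiv, toBase_arcEquiv]

lemma toBase_map_of_idx_eq {θ φ : ℝ} (h : Q.covRel θ φ) (hidx : Q.idx θ = Q.idx φ)
    (v : X.obj θ) : X.toBase hX φ (X.map h v) = X.toBase hX θ v :=
  X.toBase_map_of_mem_arc hX (Q.idx θ) h (mem_Icc_of_Ico (Q.mem_Ico_idx θ))
    (hidx ▸ mem_Icc_of_Ico (Q.mem_Ico_idx φ)) v

lemma toBase_map_of_idx_le (hm : Q.m = 0) (n : ℕ) {θ φ : ℝ} (h : Q.covRel θ φ)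
    (hn : Q.idx φ ≤ Q.idx θ + n) (v : X.obj θ) :
    X.toBase hX φ (X.map h v) = X.toBase hX θ v := by
  have hθφ := Q.idx_mono ((AtR.covRel_iff_le hm).1 h)
  induction n generalizing θ with
  | zero => exact X.toBase_map_of_idx_eq hX h (by omega) v
  | succ n ih =>
    rcases hθφ.eq_or_lt with hsame | hlt
    · exact X.toBase_map_of_idx_eq hX h hsame v
    -- pass through the end of the arc of `θ`
    have hidx := Q.idx_α (Q.idx θ + 1)
    have h₁ : Q.covRel θ (Q.α (Q.idx θ + 1)) := (AtR.covRel_iff_le hm).2 (Q.mem_Ico_idx θ).2.le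
    have h₂ : Q.covRel (Q.α (Q.idx θ + 1)) φ := (AtR.covRel_iff_le hm).2
      ((Q.mono.monotone (by omega)).trans (Q.mem_Ico_idx φ).1)
    rw [← X.map_map h₁ h₂ h v, ih h₂ (by omega) _ (by omega),
      X.toBase_map_of_mem_arc hX _ h₁ (mem_Icc_of_Ico (Q.mem_Ico_idx θ))
        (AtR.right_mem_arc _)]

lemma toBase_map {θ φ : ℝ} (h : Q.covRel θ φ) (v : X.obj θ) :
    X.toBase hX φ (X.map h v) = X.toBase hX θ v := by
  by_cases hm : Q.m = 0
  · exact X.toBase_map_of_idx_le hX hm (Q.idx φ - Q.idx θ).toNat h (by omega) v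
  · have harc := h
    simp only [AtR.covRel, if_neg hm] at harc
    obtain ⟨j, hθ, hφ, -⟩ := harc
    exact X.toBase_map_of_mem_arc hX j h hθ hφ v

lemma toBase_symm_map {θ φ : ℝ} (h : Q.covRel θ φ) (w : X.obj (Q.α 0)) :
    X.map h ((X.toBase hX θ).symm w) = (X.toBase hX φ).symm w := by
  rw [LinearEquiv.eq_symm_apply, toBase_map, LinearEquiv.apply_symm_apply]

lemma toBase_zig (n : ℕ) (v : X.obj (Q.α 0)) : X.toBase hX (Q.α n) (X.zig hX n v) = v := by
  rw [toBase_α]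
  exact (X.zig hX n).symm_apply_apply v

lemma toBase_base (v : X.obj (Q.α 0)) : X.toBase hX (Q.α 0) v = v :=
  X.toBase_zig hX 0 v

lemma toBase_castO {a b : ℝ} (h : a = b) (w : X.obj a) :
    X.toBase hX b (X.castO h w) = X.toBase hX a w := by
  subst h
  rfl

lemma toBase_per (θ : ℝ) (v : X.obj (θ + 2 * Real.pi)) :
    X.toBase hX θ (X.per θ v) = X.monodromy hX (X.toBase hX (θ + 2 * Real.pi) v) := by
  let c : ℝ → (X.obj (Q.α 0) ≃ₗ[k] X.obj (Q.α 0)) := fun θ =>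
    (X.toBase hX (θ + 2 * Real.pi)).symm.trans ((X.per θ).trans (X.toBase hX θ))
  have hc : ∀ ⦃θ φ : ℝ⦄, Q.covRel θ φ → c θ = c φ := by
    intro θ φ h
    ext w
    obtain ⟨v, rfl⟩ := (X.toBase hX (θ + 2 * Real.pi)).surjective w
    have h' := AtR.covRel_add_two_pi h
    simp only [c, LinearEquiv.trans_apply, LinearEquiv.symm_apply_apply]
    rw [← X.toBase_map hX h', LinearEquiv.symm_apply_apply, ← X.per_map_apply h h',
      toBase_map]
  have hc₀ : c (Q.α 0) = X.monodromy hX := by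
    ext w
    have hw : (X.toBase hX (Q.α 0 + 2 * Real.pi)).symm w
        = X.castO Q.α_periodN (X.zig hX Q.periodN w) := by
      rw [LinearEquiv.symm_apply_eq, toBase_castO, toBase_zig]
    simp only [c, LinearEquiv.trans_apply, hw, toBase_base]
    rfl
  have := LinearEquiv.congr_fun ((AtR.eq_of_covRel_invariant hc θ (Q.α 0)).trans hc₀)
    (X.toBase hX (θ + 2 * Real.pi) v)
  simpa only [c, LinearEquiv.trans_apply, LinearEquiv.symm_apply_apply] using this

lemma toBase_symm_monodromy (θ : ℝ) (w : X.obj (Q.α 0)) :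
    (X.toBase hX θ).symm (X.monodromy hX w)
      = X.per θ ((X.toBase hX (θ + 2 * Real.pi)).symm w) := by
  rw [LinearEquiv.symm_apply_eq, toBase_per, LinearEquiv.apply_symm_apply]

variable {V W : SRep k Q}
  (hV : ∀ ⦃θ φ : ℝ⦄ (h : Q.covRel θ φ), Function.Bijective (V.map h))
  (hW : ∀ ⦃θ φ : ℝ⦄ (h : Q.covRel θ φ), Function.Bijective (W.map h))

lemma IsHomFam.monodromy_comm {f : ∀ θ, V.obj θ →ₗ[k] W.obj θ} (hf : IsHomFam V W f)
    (v : V.obj (Q.α 0)) : f (Q.α 0) (V.monodromy hV v) = W.monodromy hW (f (Q.α 0) v) := by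
  let d : ℝ → (V.obj (Q.α 0) →ₗ[k] W.obj (Q.α 0)) := fun θ =>
    (W.toBase hW θ).toLinearMap ∘ₗ f θ ∘ₗ (V.toBase hV θ).symm.toLinearMap
  have hd : ∀ ⦃θ φ : ℝ⦄, Q.covRel θ φ → d θ = d φ := by
    intro θ φ h
    ext w
    simp only [d, LinearMap.comp_apply, LinearEquiv.coe_coe]
    rw [← V.toBase_symm_map hV h, hf.1, W.toBase_map]
  have hd₀ : d (Q.α 0 + 2 * Real.pi) = f (Q.α 0) := by
    rw [AtR.eq_of_covRel_invariant hd _ (Q.α 0)]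
    ext w
    simp only [d, LinearMap.comp_apply, LinearEquiv.coe_coe, toBase_base]
    rw [(LinearEquiv.symm_apply_eq _).2 (V.toBase_base hV w).symm]
  obtain ⟨x, rfl⟩ := (V.toBase hV (Q.α 0 + 2 * Real.pi)).surjective v
  calc f (Q.α 0) (V.monodromy hV (V.toBase hV (Q.α 0 + 2 * Real.pi) x))
      = f (Q.α 0) (V.per (Q.α 0) x) := by rw [← toBase_per, toBase_base]
    _ = W.per (Q.α 0) (f (Q.α 0 + 2 * Real.pi) x) := hf.2 _ x
    _ = W.monodromy hW (d (Q.α 0 + 2 * Real.pi) (V.toBase hV (Q.α 0 + 2 * Real.pi) x)) := by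
      simp only [d, LinearMap.comp_apply, LinearEquiv.coe_coe, LinearEquiv.symm_apply_apply]
      rw [← toBase_per, toBase_base]
    _ = W.monodromy hW (f (Q.α 0) (V.toBase hV (Q.α 0 + 2 * Real.pi) x)) := by rw [hd₀]

lemma repIso_of_monodromy_comm (A : V.obj (Q.α 0) ≃ₗ[k] W.obj (Q.α 0))
    (hA : ∀ v, A (V.monodromy hV v) = W.monodromy hW (A v)) : RepIso V W := by
  refine ⟨fun θ => (V.toBase hV θ).trans (A.trans (W.toBase hW θ).symm), fun h v => ?_,
    fun θ v => ?_⟩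
  · simp only [LinearEquiv.trans_apply]
    rw [V.toBase_map, W.toBase_symm_map]
  · simp only [LinearEquiv.trans_apply]
    rw [V.toBase_per, hA, W.toBase_symm_monodromy]

end SRep

/-- Two Jordan cells are isomorphic if and only if their monodromy automorphisms
at `e^{iα₀}` are conjugate. -/
theorem jordan_iso_iff {k : Type} [Field k] {Q : AtR} (V W : SRep k Q)
    (hV : SRep.IsJordanCell V) (hW : SRep.IsJordanCell W) :
    SRep.RepIso V W ↔ ∃ A : V.obj (Q.α 0) ≃ₗ[k] W.obj (Q.α 0),
      ∀ v : V.obj (Q.α 0),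
        V.monodromy hV.bij v = A.symm (W.monodromy hW.bij (A v)) := by
  constructor
  · rintro ⟨e, hmap, hper⟩
    refine ⟨e (Q.α 0), fun v => (LinearEquiv.eq_symm_apply _).2 ?_⟩
    exact SRep.IsHomFam.monodromy_comm hV.bij hW.bij (f := fun θ => (e θ).toLinearMap)
      ⟨hmap, hper⟩ v
  · rintro ⟨A, hA⟩
    refine SRep.repIso_of_monodromy_comm hV.bij hW.bij A fun v => ?_
    rw [hA, LinearEquiv.apply_symm_apply]
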